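/- arXiv:2502.13030 — 5 statements merged into one kernel-verified Lean document; each statement's English description precedes it below -/
import Mathlib

section
/- Lipschitzness of the minimizer of a perturbed strongly convex objective (Lemma F.1). Let 𝒞 ⊆ ℝ^d be a closed convex set. Let ψ : 𝒞 → ℝ be differentiable and μ-strongly convex (μ > 0), and let g : 𝒞 → ℝ be differentiable with L-Lipschitz gradient. Suppose ψ + g is convex. Let x_ψ be a minimizer of ψ over 𝒞 and x_{ψ+g} a minimizer of ψ + g over 𝒞. Then for every x ∈ 𝒞: ‖x_{ψ+g} − x_ψ‖₂ ≤ (1/μ)·(L·‖x_{ψ+g} − x‖₂ + ‖∇g(x)‖₂). -/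
open scoped RealInnerProductSpace

lemma aux_opt {d : ℕ} {C : Set (EuclideanSpace ℝ (Fin d))} (hC : Convex ℝ C)
    {f : EuclideanSpace ℝ (Fin d) → ℝ} {f' a y : EuclideanSpace ℝ (Fin d)}
    (ha : a ∈ C) (hy : y ∈ C) (hdf : HasGradientAt f f' a)
    (hmin : ∀ z ∈ C, f a ≤ f z) : 0 ≤ ⟪f', y - a⟫ := by
  have hmin' : IsLocalMinOn f C a := (isMinOn_iff.mpr hmin).localize
  have := hmin'.hasFDerivWithinAt_nonneg hdf.hasFDerivAt.hasFDerivWithinAt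
    (sub_mem_posTangentConeAt_of_segment_subset (hC.segment_subset ha hy))
  simpa [InnerProductSpace.toDual_apply_apply] using this

/-- Lemma F.1: Lipschitzness of the minimizer of a perturbed strongly convex objective.
Let `C ⊆ ℝ^d` be closed and convex, `ψ` differentiable and `μ`-strongly convex on `C`
(in the first-order sense `⟪∇ψ x − ∇ψ y, x − y⟫ ≥ μ‖x − y‖²`), and `g` differentiable with
`L`-Lipschitz gradient on `C`, with `ψ + g` convex on `C`.  If `xψ` minimizes `ψ` over `C`
and `xψg` minimizes `ψ + g` over `C`, then for every `x ∈ C`,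
`‖xψg − xψ‖ ≤ (1/μ)(L‖xψg − x‖ + ‖∇g x‖)`. -/
theorem perturbed_strongly_convex_minimizer_lipschitz {d : ℕ}
    (C : Set (EuclideanSpace ℝ (Fin d))) (hCconv : Convex ℝ C) (hCcl : IsClosed C)
    (ψ g : EuclideanSpace ℝ (Fin d) → ℝ)
    (ψ' g' : EuclideanSpace ℝ (Fin d) → EuclideanSpace ℝ (Fin d))
    (μ L : ℝ) (hμ : 0 < μ)
    (hψdiff : ∀ x ∈ C, HasGradientAt ψ (ψ' x) x)
    (hgdiff : ∀ x ∈ C, HasGradientAt g (g' x) x)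
    (hstrong : ∀ x ∈ C, ∀ y ∈ C, μ * ‖x - y‖ ^ 2 ≤ ⟪ψ' x - ψ' y, x - y⟫)
    (hsmooth : ∀ x ∈ C, ∀ y ∈ C, ‖g' x - g' y‖ ≤ L * ‖x - y‖)
    (hconv : ConvexOn ℝ C (fun x => ψ x + g x))
    (xψ xψg : EuclideanSpace ℝ (Fin d)) (hxψ : xψ ∈ C) (hxψg : xψg ∈ C)
    (hminψ : ∀ y ∈ C, ψ xψ ≤ ψ y)
    (hminψg : ∀ y ∈ C, ψ xψg + g xψg ≤ ψ y + g y) :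
    ∀ x ∈ C, ‖xψg - xψ‖ ≤ (1 / μ) * (L * ‖xψg - x‖ + ‖g' x‖) := by
  intro x hx
  -- optimality of xψ : 0 ≤ ⟪ψ' xψ, xψg - xψ⟫
  have h1 : 0 ≤ ⟪ψ' xψ, xψg - xψ⟫ := aux_opt hCconv hxψ hxψg (hψdiff xψ hxψ) hminψ
  -- optimality of xψg for ψ + g : 0 ≤ ⟪ψ' xψg + g' xψg, xψ - xψg⟫
  have hdsum : HasGradientAt (fun z => ψ z + g z) (ψ' xψg + g' xψg) xψg := by
    have := (hψdiff xψg hxψg).hasFDerivAt.add (hgdiff xψg hxψg).hasFDerivAt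
    rw [hasGradientAt_iff_hasFDerivAt]
    rw [map_add]
    exact this
  have h2 : 0 ≤ ⟪ψ' xψg + g' xψg, xψ - xψg⟫ :=
    aux_opt hCconv hxψg hxψ hdsum hminψg
  -- strong convexity
  have h3 := hstrong xψg hxψg xψ hxψ
  have key : μ * ‖xψg - xψ‖ ^ 2 ≤ ⟪g' x - g' xψg, xψg - xψ⟫ + ⟪-(g' x), xψg - xψ⟫ := by
    have e1 : ⟪ψ' xψg - ψ' xψ, xψg - xψ⟫
        = ⟪ψ' xψg, xψg - xψ⟫ - ⟪ψ' xψ, xψg - xψ⟫ := by rw [inner_sub_left]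
    have e2 : ⟪ψ' xψg + g' xψg, xψ - xψg⟫
        = -⟪ψ' xψg, xψg - xψ⟫ - ⟪g' xψg, xψg - xψ⟫ := by
      rw [inner_add_left]
      rw [show xψ - xψg = -(xψg - xψ) by abel, inner_neg_right, inner_neg_right]
      ring
    have e3 : ⟪g' x - g' xψg, xψg - xψ⟫ + ⟪-(g' x), xψg - xψ⟫
        = -⟪g' xψg, xψg - xψ⟫ := by
      rw [inner_sub_left, inner_neg_left]; ring
    rw [e3]
    nlinarith [h3, h1, h2, e1, e2]
  have cs1 : ⟪g' x - g' xψg, xψg - xψ⟫ ≤ ‖g' x - g' xψg‖ * ‖xψg - xψ‖ :=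
    real_inner_le_norm _ _
  have cs2 : ⟪-(g' x), xψg - xψ⟫ ≤ ‖g' x‖ * ‖xψg - xψ‖ := by
    simpa using real_inner_le_norm (-(g' x)) (xψg - xψ)
  have hsm : ‖g' x - g' xψg‖ ≤ L * ‖x - xψg‖ := hsmooth x hx xψg hxψg
  have hnormswap : ‖x - xψg‖ = ‖xψg - x‖ := norm_sub_rev _ _
  have hn : (0:ℝ) ≤ ‖xψg - xψ‖ := norm_nonneg _
  have cs1' : ⟪g' x - g' xψg, xψg - xψ⟫ ≤ L * ‖xψg - x‖ * ‖xψg - xψ‖ := by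
    refine cs1.trans ?_
    rw [← hnormswap]
    exact mul_le_mul_of_nonneg_right hsm hn
  have hbound : μ * ‖xψg - xψ‖ ^ 2 ≤ (L * ‖xψg - x‖ + ‖g' x‖) * ‖xψg - xψ‖ := by
    nlinarith [key, cs1', cs2]
  rcases eq_or_lt_of_le (norm_nonneg (xψg - xψ)) with h0 | h0
  · rw [← h0]
    have hL0 : 0 ≤ L * ‖xψg - x‖ + ‖g' x‖ := by
      have : (0:ℝ) ≤ L * ‖xψg - x‖ := by
        have := hsmooth xψg hxψg x hx
        nlinarith [norm_nonneg (g' xψg - g' x), norm_sub_rev (g' x) (g' xψg)]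
      positivity
    positivity
  · rw [one_div, inv_mul_eq_div, le_div_iff₀ hμ]
    nlinarith [hbound, h0]
end

section
/- Lipschitzness of the empirical LR-QR minimizer in β (Lemma F.2). Fix α ∈ (0,1/2], λ > 0, B > 0, and 0 < β_min ≤ β_max. Let x₁,…,x_{n₁} ∈ 𝒳 with scores s₁,…,s_{n₁} ∈ [0,1], x'₁,…,x'_{n₂} ∈ 𝒳, and x''₁,…,x''_{n₃} ∈ 𝒳 be fixed points, and suppose sup_{x∈𝒳} ‖Φ(x)‖₂ ≤ C_Φ < ∞ and the sample covariance Σ̂ = n₃⁻¹Σ_k Φ(x''_k)Φ(x''_k)ᵀ satisfies λ_min(Σ̂) > 0. For β ∈ [β_min, β_max], let ĥ_β be the (unique) minimizer over ℋ_B of L̂_λ(·,β), where L̂_λ(h,β) = n₁⁻¹Σ_i ℓ_α(h(x_i),s_i) + λβ²·n₃⁻¹Σ_k h(x''_k)² − 2λβ·n₂⁻¹Σ_j h(x'_j). Then β ↦ ĥ_β is C₁-Lipschitz on [β_min,β_max] and β ↦ β·ĥ_β is C₂-Lipschitz on [β_min,β_max] with respect to the norm ‖⟨γ,Φ⟩‖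 = ‖γ‖₂, where C₁ = (β_min²·λ_min(Σ̂))⁻¹·((2β_max·λ_max(Σ̂)·B + C_Φ) + 4β_max·λ_max(Σ̂)·B) and C₂ = B + β_max·C₁. -/
open Set
open scoped RealInnerProductSpace

/-- The pinball (quantile) loss: `ℓ_α(c,s) = (1−α)(s−c)` if `s ≥ c`, and `α(c−s)` if `s < c`. -/
noncomputable def pinball (α c s : ℝ) : ℝ := if c ≤ s then (1 - α) * (s - c) else α * (c - s)

/-- The empirical LR-QR risk on fixed data, for the linear hypothesis `h_γ = ⟨γ, Φ(·)⟩`: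
`L̂_λ(h_γ, β) = n₁⁻¹Σᵢ ℓ_α(h_γ(xᵢ), sᵢ) + λβ²·n₃⁻¹Σₖ h_γ(x''ₖ)² − 2λβ·n₂⁻¹Σⱼ h_γ(x'ⱼ)`. -/
noncomputable def empLossData {𝒳 : Type*} {d : ℕ} (Φ : 𝒳 → EuclideanSpace ℝ (Fin d))
    (α lam : ℝ) {n₁ n₂ n₃ : ℕ} (xd : Fin n₁ → 𝒳) (sd : Fin n₁ → ℝ)
    (x' : Fin n₂ → 𝒳) (x'' : Fin n₃ → 𝒳) (γ : EuclideanSpace ℝ (Fin d)) (β : ℝ) : ℝ :=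
  (n₁ : ℝ)⁻¹ * ∑ i, pinball α ⟪γ, Φ (xd i)⟫ (sd i)
    + lam * β ^ 2 * ((n₃ : ℝ)⁻¹ * ∑ k, ⟪γ, Φ (x'' k)⟫ ^ 2)
    - 2 * lam * β * ((n₂ : ℝ)⁻¹ * ∑ j, ⟪γ, Φ (x' j)⟫)

/- ## Auxiliary definitions and lemmas -/

/-- The empirical quadratic form `γ ↦ m⁻¹ Σ ⟪γ, w k⟫²`. -/
noncomputable def qform {d m : ℕ} (w : Fin m → EuclideanSpace ℝ (Fin d))
    (γ : EuclideanSpace ℝ (Fin d)) : ℝ := (m : ℝ)⁻¹ * ∑ k, ⟪γ, w k⟫ ^ 2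

/-- The empirical linear form `γ ↦ m⁻¹ Σ ⟪γ, w k⟫`. -/
noncomputable def lform {d m : ℕ} (w : Fin m → EuclideanSpace ℝ (Fin d))
    (γ : EuclideanSpace ℝ (Fin d)) : ℝ := (m : ℝ)⁻¹ * ∑ k, ⟪γ, w k⟫

lemma pinball_eq_max (α c s : ℝ) (h0 : 0 ≤ α) (h1 : α ≤ 1) :
    pinball α c s = max ((1 - α) * (s - c)) (α * (c - s)) := by
  unfold pinball
  rcases le_or_gt c s with h | h
  · rw [if_pos h, max_eq_left]
    nlinarith
  · rw [if_neg (not_le.2 h), max_eq_right]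
    nlinarith

lemma pinball_cvx (α s x y t : ℝ) (h0 : 0 ≤ α) (h1 : α ≤ 1) (ht0 : 0 ≤ t) (ht1 : t ≤ 1) :
    pinball α ((1 - t) * x + t * y) s ≤ (1 - t) * pinball α x s + t * pinball α y s := by
  rw [pinball_eq_max α _ s h0 h1, pinball_eq_max α x s h0 h1, pinball_eq_max α y s h0 h1]
  apply max_le
  · calc (1 - α) * (s - ((1 - t) * x + t * y))
        = (1 - t) * ((1 - α) * (s - x)) + t * ((1 - α) * (s - y)) := by ring
      _ ≤ (1 - t) * max ((1 - α) * (s - x)) (α * (x - s))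
            + t * max ((1 - α) * (s - y)) (α * (y - s)) :=
        add_le_add (mul_le_mul_of_nonneg_left (le_max_left _ _) (by linarith))
          (mul_le_mul_of_nonneg_left (le_max_left _ _) ht0)
  · calc α * (((1 - t) * x + t * y) - s)
        = (1 - t) * (α * (x - s)) + t * (α * (y - s)) := by ring
      _ ≤ (1 - t) * max ((1 - α) * (s - x)) (α * (x - s))
            + t * max ((1 - α) * (s - y)) (α * (y - s)) :=
        add_le_add (mul_le_mul_of_nonneg_left (le_max_right _ _) (by linarith))
          (mul_le_mul_of_nonneg_left (le_max_right _ _) ht0)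

lemma qform_nonneg {d m : ℕ} (w : Fin m → EuclideanSpace ℝ (Fin d))
    (γ : EuclideanSpace ℝ (Fin d)) : 0 ≤ qform w γ :=
  mul_nonneg (inv_nonneg.2 (Nat.cast_nonneg _)) (Finset.sum_nonneg fun _ _ => sq_nonneg _)

lemma qform_smul {d m : ℕ} (w : Fin m → EuclideanSpace ℝ (Fin d)) (c : ℝ)
    (γ : EuclideanSpace ℝ (Fin d)) : qform w (c • γ) = c ^ 2 * qform w γ := by
  simp only [qform, real_inner_smul_left, mul_pow]
  rw [← Finset.mul_sum]
  ring

lemma qform_combo {d m : ℕ} (w : Fin m → EuclideanSpace ℝ (Fin d))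
    (a b : EuclideanSpace ℝ (Fin d)) (t : ℝ) :
    qform w ((1 - t) • a + t • b)
      = (1 - t) * qform w a + t * qform w b - t * (1 - t) * qform w (a - b) := by
  simp only [qform, inner_add_left, inner_sub_left, real_inner_smul_left]
  have h : ∀ k : Fin m, ((1 - t) * ⟪a, w k⟫ + t * ⟪b, w k⟫) ^ 2
      = (1 - t) * ⟪a, w k⟫ ^ 2 + t * ⟪b, w k⟫ ^ 2
        - t * (1 - t) * (⟪a, w k⟫ - ⟪b, w k⟫) ^ 2 := fun k => by ring
  simp only [h, Finset.sum_add_distrib, Finset.sum_sub_distrib, ← Finset.mul_sum]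
  ring

lemma qform_diff {d m : ℕ} (w : Fin m → EuclideanSpace ℝ (Fin d))
    (u v : EuclideanSpace ℝ (Fin d)) :
    qform w v - qform w u = (m : ℝ)⁻¹ * ∑ k, (⟪v + u, w k⟫ * ⟪v - u, w k⟫) := by
  simp only [qform, inner_add_left, inner_sub_left]
  rw [← mul_sub, ← Finset.sum_sub_distrib]
  congr 1
  exact Finset.sum_congr rfl fun k _ => by ring

lemma qform_diff_bound {d m : ℕ} (w : Fin m → EuclideanSpace ℝ (Fin d)) (lmax : ℝ)
    (hlmax0 : 0 ≤ lmax) (hmax : ∀ γ : EuclideanSpace ℝ (Fin d), qform w γ ≤ lmax * ‖γ‖ ^ 2)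
    (u v : EuclideanSpace ℝ (Fin d)) :
    |qform w v - qform w u| ≤ lmax * ‖v + u‖ * ‖v - u‖ := by
  have cs : (∑ k, (⟪v + u, w k⟫ * ⟪v - u, w k⟫)) ^ 2
      ≤ (∑ k, ⟪v + u, w k⟫ ^ 2) * (∑ k, ⟪v - u, w k⟫ ^ 2) :=
    Finset.sum_mul_sq_le_sq_mul_sq _ _ _
  have h1 : (qform w v - qform w u) ^ 2 ≤ qform w (v + u) * qform w (v - u) := by
    calc (qform w v - qform w u) ^ 2
        = ((m : ℝ)⁻¹) ^ 2 * (∑ k, (⟪v + u, w k⟫ * ⟪v - u, w k⟫)) ^ 2 := by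
          rw [qform_diff]; ring
      _ ≤ ((m : ℝ)⁻¹) ^ 2 * ((∑ k, ⟪v + u, w k⟫ ^ 2) * (∑ k, ⟪v - u, w k⟫ ^ 2)) :=
          mul_le_mul_of_nonneg_left cs (sq_nonneg _)
      _ = qform w (v + u) * qform w (v - u) := by simp only [qform]; ring
  have h2 : qform w (v + u) * qform w (v - u) ≤ (lmax * ‖v + u‖ * ‖v - u‖) ^ 2 := by
    have ha := hmax (v + u)
    have hb := hmax (v - u)
    have hq1 := qform_nonneg w (v + u)
    have hq2 := qform_nonneg w (v - u)
    nlinarith [norm_nonneg (v + u), norm_nonneg (v - u), sq_nonneg (‖v + u‖), sq_nonneg (‖v - u‖)]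
  have hy : 0 ≤ lmax * ‖v + u‖ * ‖v - u‖ := by positivity
  nlinarith [abs_nonneg (qform w v - qform w u), sq_abs (qform w v - qform w u)]

lemma lform_combo {d m : ℕ} (w : Fin m → EuclideanSpace ℝ (Fin d))
    (a b : EuclideanSpace ℝ (Fin d)) (t : ℝ) :
    lform w ((1 - t) • a + t • b) = (1 - t) * lform w a + t * lform w b := by
  simp only [lform, inner_add_left, real_inner_smul_left]
  rw [Finset.sum_add_distrib, ← Finset.mul_sum, ← Finset.mul_sum]
  ring

lemma lform_sub {d m : ℕ} (w : Fin m → EuclideanSpace ℝ (Fin d))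
    (u v : EuclideanSpace ℝ (Fin d)) : lform w v - lform w u = lform w (v - u) := by
  simp only [lform, inner_sub_left]
  rw [Finset.sum_sub_distrib]
  ring

lemma lform_abs_le {d m : ℕ} (hm : 0 < m) (w : Fin m → EuclideanSpace ℝ (Fin d)) (C : ℝ)
    (hC : ∀ k, ‖w k‖ ≤ C) (γ : EuclideanSpace ℝ (Fin d)) :
    |lform w γ| ≤ C * ‖γ‖ := by
  have hsum : |∑ k, ⟪γ, w k⟫| ≤ ∑ k : Fin m, C * ‖γ‖ := by
    refine (Finset.abs_sum_le_sum_abs _ _).trans (Finset.sum_le_sum fun k _ => ?_)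
    calc |⟪γ, w k⟫| ≤ ‖γ‖ * ‖w k‖ := abs_real_inner_le_norm _ _
      _ ≤ ‖γ‖ * C := mul_le_mul_of_nonneg_left (hC k) (norm_nonneg _)
      _ = C * ‖γ‖ := by ring
  have hmpos : (0 : ℝ) < (m : ℝ) := Nat.cast_pos.2 hm
  calc |lform w γ| = (m : ℝ)⁻¹ * |∑ k, ⟪γ, w k⟫| := by
        rw [lform, abs_mul, abs_inv, Nat.abs_cast]
    _ ≤ (m : ℝ)⁻¹ * (∑ k : Fin m, C * ‖γ‖) := by
        exact mul_le_mul_of_nonneg_left hsum (inv_nonneg.2 hmpos.le)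
    _ = C * ‖γ‖ := by
        rw [Finset.sum_const, Finset.card_univ, Fintype.card_fin, nsmul_eq_mul]
        field_simp

set_option maxHeartbeats 1000000 in
/-- Lemma F.2: Lipschitzness of the empirical LR-QR minimizer in `β`. -/
theorem empirical_lrqr_minimizer_lipschitz_in_beta
    {𝒳 : Type*} {d : ℕ} (Φ : 𝒳 → EuclideanSpace ℝ (Fin d))
    (CΦ : ℝ) (hCΦ : ∀ x, ‖Φ x‖ ≤ CΦ)
    (α lam B βmin βmax : ℝ)
    (hα0 : 0 < α) (hα : α ≤ 1 / 2) (hlam : 0 < lam) (hB : 0 < B)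
    (hβmin : 0 < βmin) (hββ : βmin ≤ βmax)
    {n₁ n₂ n₃ : ℕ} (hn₁ : 0 < n₁) (hn₂ : 0 < n₂) (hn₃ : 0 < n₃)
    (xd : Fin n₁ → 𝒳) (sd : Fin n₁ → ℝ) (hsd : ∀ i, sd i ∈ Icc (0 : ℝ) 1)
    (x' : Fin n₂ → 𝒳) (x'' : Fin n₃ → 𝒳)
    (lmin lmax : ℝ) (hlmin0 : 0 < lmin)
    (hlmin : IsGLB {t : ℝ | ∃ v : EuclideanSpace ℝ (Fin d), ‖v‖ = 1 ∧
      t = (n₃ : ℝ)⁻¹ * ∑ k, ⟪v, Φ (x'' k)⟫ ^ 2} lmin)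
    (hlmax : IsLUB {t : ℝ | ∃ v : EuclideanSpace ℝ (Fin d), ‖v‖ = 1 ∧
      t = (n₃ : ℝ)⁻¹ * ∑ k, ⟪v, Φ (x'' k)⟫ ^ 2} lmax)
    (hb : ℝ → EuclideanSpace ℝ (Fin d))
    (hhb : ∀ β ∈ Icc βmin βmax, ‖hb β‖ ≤ B ∧
      ∀ γ : EuclideanSpace ℝ (Fin d), ‖γ‖ ≤ B →
        empLossData Φ α lam xd sd x' x'' (hb β) β ≤ empLossData Φ α lam xd sd x' x'' γ β) :
    (∀ β ∈ Icc βmin βmax, ∀ β' ∈ Icc βmin βmax,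
      ‖hb β - hb β'‖ ≤
        (βmin ^ 2 * lmin)⁻¹ * ((2 * βmax * lmax * B + CΦ) + 4 * βmax * lmax * B) * |β - β'|)
    ∧
    (∀ β ∈ Icc βmin βmax, ∀ β' ∈ Icc βmin βmax,
      ‖β • hb β - β' • hb β'‖ ≤
        (B + βmax * ((βmin ^ 2 * lmin)⁻¹ * ((2 * βmax * lmax * B + CΦ) + 4 * βmax * lmax * B)))
          * |β - β'|) := by
  have hβmax0 : 0 < βmax := lt_of_lt_of_le hβmin hββ
  set w'' : Fin n₃ → EuclideanSpace ℝ (Fin d) := fun k => Φ (x'' k) with hw''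
  set w' : Fin n₂ → EuclideanSpace ℝ (Fin d) := fun j => Φ (x' j) with hw'
  set Qf := qform w'' with hQf
  set Lf := lform w' with hLf
  set P : EuclideanSpace ℝ (Fin d) → ℝ :=
    fun γ => (n₁ : ℝ)⁻¹ * ∑ i, pinball α ⟪γ, Φ (xd i)⟫ (sd i) with hP
  set F := empLossData Φ α lam xd sd x' x'' with hF
  have hEdef : ∀ (γ : EuclideanSpace ℝ (Fin d)) (β : ℝ),
      F γ β = P γ + lam * β ^ 2 * Qf γ - 2 * lam * β * Lf γ := by
    intro γ β
    simp only [hF, hP, hQf, hLf, hw'', hw', empLossData, qform, lform]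
  -- extreme-eigenvalue bounds on the quadratic form
  have hqmin : ∀ γ : EuclideanSpace ℝ (Fin d), lmin * ‖γ‖ ^ 2 ≤ Qf γ := by
    intro γ
    rcases eq_or_ne γ 0 with h | h
    · simp [h, hQf, qform]
    · have hn : (0 : ℝ) < ‖γ‖ := norm_pos_iff.2 h
      have hv1 : ‖(‖γ‖⁻¹ • γ : EuclideanSpace ℝ (Fin d))‖ = 1 := norm_smul_inv_norm h
      have h1 : lmin ≤ Qf (‖γ‖⁻¹ • γ) := hlmin.1 ⟨‖γ‖⁻¹ • γ, hv1, rfl⟩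
      have h2 : Qf (‖γ‖⁻¹ • γ) = (‖γ‖⁻¹) ^ 2 * Qf γ := qform_smul _ _ _
      rw [h2] at h1
      have := mul_le_mul_of_nonneg_right h1 (sq_nonneg ‖γ‖)
      calc lmin * ‖γ‖ ^ 2 ≤ (‖γ‖⁻¹) ^ 2 * Qf γ * ‖γ‖ ^ 2 := this
        _ = Qf γ := by field_simp
  have hqmax : ∀ γ : EuclideanSpace ℝ (Fin d), Qf γ ≤ lmax * ‖γ‖ ^ 2 := by
    intro γ
    rcases eq_or_ne γ 0 with h | h
    · simp [h, hQf, qform]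
    · have hn : (0 : ℝ) < ‖γ‖ := norm_pos_iff.2 h
      have hv1 : ‖(‖γ‖⁻¹ • γ : EuclideanSpace ℝ (Fin d))‖ = 1 := norm_smul_inv_norm h
      have h1 : Qf (‖γ‖⁻¹ • γ) ≤ lmax := hlmax.1 ⟨‖γ‖⁻¹ • γ, hv1, rfl⟩
      have h2 : Qf (‖γ‖⁻¹ • γ) = (‖γ‖⁻¹) ^ 2 * Qf γ := qform_smul _ _ _
      rw [h2] at h1
      have := mul_le_mul_of_nonneg_right h1 (sq_nonneg ‖γ‖)
      calc Qf γ = (‖γ‖⁻¹) ^ 2 * Qf γ * ‖γ‖ ^ 2 := by field_simp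
        _ ≤ lmax * ‖γ‖ ^ 2 := this
  have hlmax0 : 0 < lmax := by
    by_contra hcon
    push_neg at hcon
    have hne : {t : ℝ | ∃ v : EuclideanSpace ℝ (Fin d), ‖v‖ = 1 ∧
        t = (n₃ : ℝ)⁻¹ * ∑ k, ⟪v, Φ (x'' k)⟫ ^ 2}.Nonempty := by
      by_contra hemp
      have hlb : lmin + 1 ∈ lowerBounds {t : ℝ | ∃ v : EuclideanSpace ℝ (Fin d), ‖v‖ = 1 ∧
          t = (n₃ : ℝ)⁻¹ * ∑ k, ⟪v, Φ (x'' k)⟫ ^ 2} := fun t ht => absurd ⟨t, ht⟩ hemp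
      linarith [hlmin.2 hlb]
    obtain ⟨t, ht⟩ := hne
    have h1 := hlmin.1 ht
    have h2 := hlmax.1 ht
    linarith
  have hC0 : 0 ≤ CΦ := le_trans (norm_nonneg _) (hCΦ (x' ⟨0, hn₂⟩))
  -- strong minimality
  have hstrong : ∀ β ∈ Icc βmin βmax, ∀ γ : EuclideanSpace ℝ (Fin d), ‖γ‖ ≤ B →
      lam * β ^ 2 * lmin * ‖γ - hb β‖ ^ 2 ≤ F γ β - F (hb β) β := by
    intro β hβ γ hγB
    obtain ⟨huB, hmin⟩ := hhb β hβ
    set u := hb β with hu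
    have hkey : ∀ t : ℝ, 0 < t → t ≤ 1 →
        lam * β ^ 2 * (1 - t) * Qf (u - γ) ≤ F γ β - F u β := by
      intro t ht0 ht1
      set m := (1 - t) • u + t • γ with hm
      have hmB : ‖m‖ ≤ B := by
        calc ‖m‖ ≤ ‖(1 - t) • u‖ + ‖t • γ‖ := norm_add_le _ _
          _ = (1 - t) * ‖u‖ + t * ‖γ‖ := by
              rw [norm_smul, norm_smul, Real.norm_eq_abs, Real.norm_eq_abs,
                abs_of_nonneg (by linarith), abs_of_nonneg ht0.le]
          _ ≤ (1 - t) * B + t * B :=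
              add_le_add (mul_le_mul_of_nonneg_left huB (by linarith))
                (mul_le_mul_of_nonneg_left hγB ht0.le)
          _ = B := by ring
      have hminm := hmin m hmB
      have hinner : ∀ x : 𝒳, ⟪m, Φ x⟫ = (1 - t) * ⟪u, Φ x⟫ + t * ⟪γ, Φ x⟫ := by
        intro x; rw [hm, inner_add_left, real_inner_smul_left, real_inner_smul_left]
      have hPm : P m ≤ (1 - t) * P u + t * P γ := by
        have hsum : ∑ i, pinball α ⟪m, Φ (xd i)⟫ (sd i)
            ≤ ∑ i, ((1 - t) * pinball α ⟪u, Φ (xd i)⟫ (sd i)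
                + t * pinball α ⟪γ, Φ (xd i)⟫ (sd i)) :=
          Finset.sum_le_sum fun i _ => by
            rw [hinner]
            exact pinball_cvx α (sd i) _ _ t hα0.le (by linarith) ht0.le ht1
        calc P m ≤ (n₁ : ℝ)⁻¹ * ∑ i, ((1 - t) * pinball α ⟪u, Φ (xd i)⟫ (sd i)
                + t * pinball α ⟪γ, Φ (xd i)⟫ (sd i)) :=
              mul_le_mul_of_nonneg_left hsum (by positivity)
          _ = (1 - t) * P u + t * P γ := by
              simp only [hP]
              rw [Finset.sum_add_distrib, ← Finset.mul_sum, ← Finset.mul_sum]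
              ring
      have hQm : Qf m = (1 - t) * Qf u + t * Qf γ - t * (1 - t) * Qf (u - γ) :=
        qform_combo w'' u γ t
      have hLm : Lf m = (1 - t) * Lf u + t * Lf γ := lform_combo w' u γ t
      have h1 : F u β ≤ P m + lam * β ^ 2 * ((1 - t) * Qf u + t * Qf γ
          - t * (1 - t) * Qf (u - γ)) - 2 * lam * β * ((1 - t) * Lf u + t * Lf γ) := by
        calc F u β ≤ F m β := hminm
          _ = _ := by rw [hEdef m β, hQm, hLm]
      rw [hEdef u β] at h1
      have h2 : (lam * β ^ 2 * (1 - t) * Qf (u - γ)) * t ≤ (F γ β - F u β) * t := by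
        rw [hEdef γ β, hEdef u β]
        nlinarith [h1, hPm]
      exact le_of_mul_le_mul_right h2 ht0
    have ha0 : 0 ≤ F γ β - F u β := by linarith [hmin γ hγB]
    have hq0 : 0 ≤ Qf (u - γ) := qform_nonneg _ _
    have hc : lam * β ^ 2 * Qf (u - γ) ≤ F γ β - F u β := by
      by_contra hcon
      push_neg at hcon
      have hcpos : 0 < lam * β ^ 2 * Qf (u - γ) := lt_of_le_of_lt ha0 hcon
      set c := lam * β ^ 2 * Qf (u - γ) with hcdef
      set a := F γ β - F u β with hadef
      have ht0 : 0 < (c - a) / (2 * c) := by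
        apply div_pos (by linarith) (by linarith)
      have ht1 : (c - a) / (2 * c) ≤ 1 := by
        rw [div_le_one (by linarith)]; linarith
      have hk := hkey _ ht0 ht1
      have hct : c * ((c - a) / (2 * c)) = (c - a) / 2 := by
        field_simp
      have hexp : lam * β ^ 2 * (1 - (c - a) / (2 * c)) * Qf (u - γ)
          = c - c * ((c - a) / (2 * c)) := by rw [hcdef]; ring
      rw [hexp, hct] at hk
      linarith
    have hmono := mul_le_mul_of_nonneg_left (hqmin (u - γ))
      (by positivity : (0 : ℝ) ≤ lam * β ^ 2)
    have hnr : ‖γ - u‖ = ‖u - γ‖ := norm_sub_rev _ _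
    rw [hnr]
    calc lam * β ^ 2 * lmin * ‖u - γ‖ ^ 2
        = lam * β ^ 2 * (lmin * ‖u - γ‖ ^ 2) := by ring
      _ ≤ lam * β ^ 2 * Qf (u - γ) := hmono
      _ ≤ F γ β - F (hb β) β := hc
  -- main Lipschitz bound
  have part1 : ∀ β ∈ Icc βmin βmax, ∀ β' ∈ Icc βmin βmax,
      ‖hb β - hb β'‖ ≤
        (βmin ^ 2 * lmin)⁻¹ * ((2 * βmax * lmax * B + CΦ) + 4 * βmax * lmax * B) * |β - β'| := by
    intro β hβ β' hβ'
    have huB := (hhb β hβ).1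
    have hvB := (hhb β' hβ').1
    set u := hb β with hu
    set v := hb β' with hv
    have h1 := hstrong β hβ v hvB
    have h2 := hstrong β' hβ' u huB
    set D := ‖u - v‖ with hD
    have hD0 : 0 ≤ D := norm_nonneg _
    have hDrev : ‖v - u‖ = D := norm_sub_rev _ _
    rw [hDrev] at h1
    have hdiffF : (F v β - F u β) + (F u β' - F v β')
        = lam * (β ^ 2 - β' ^ 2) * (Qf v - Qf u) - 2 * lam * (β - β') * (Lf v - Lf u) := by
      simp only [hEdef]; ring
    have hQd : |Qf v - Qf u| ≤ lmax * (2 * B) * D := by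
      calc |Qf v - Qf u| ≤ lmax * ‖v + u‖ * ‖v - u‖ :=
          qform_diff_bound w'' lmax hlmax0.le hqmax u v
        _ ≤ lmax * (2 * B) * D := by
            rw [hDrev]
            apply mul_le_mul_of_nonneg_right _ hD0
            apply mul_le_mul_of_nonneg_left _ hlmax0.le
            exact le_trans (norm_add_le _ _) (by linarith)
    have hLd : |Lf v - Lf u| ≤ CΦ * D := by
      rw [hLf, lform_sub w' u v]
      calc |lform w' (v - u)| ≤ CΦ * ‖v - u‖ :=
          lform_abs_le hn₂ w' CΦ (fun j => hCΦ (x' j)) (v - u)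
        _ = CΦ * D := by rw [hDrev]
    have hββ2 : |β ^ 2 - β' ^ 2| ≤ 2 * βmax * |β - β'| := by
      rw [show β ^ 2 - β' ^ 2 = (β + β') * (β - β') by ring, abs_mul]
      apply mul_le_mul_of_nonneg_right _ (abs_nonneg _)
      rw [abs_of_pos (by linarith [hβ.1, hβ'.1] : (0 : ℝ) < β + β')]
      linarith [hβ.2, hβ'.2]
    -- bound the right-hand side
    have e1 : lam * (β ^ 2 - β' ^ 2) * (Qf v - Qf u)
        ≤ lam * (2 * βmax * |β - β'|) * (lmax * (2 * B) * D) := by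
      calc lam * (β ^ 2 - β' ^ 2) * (Qf v - Qf u)
          ≤ |lam * (β ^ 2 - β' ^ 2) * (Qf v - Qf u)| := le_abs_self _
        _ = lam * |β ^ 2 - β' ^ 2| * |Qf v - Qf u| := by
            rw [abs_mul, abs_mul, abs_of_pos hlam]
        _ ≤ lam * (2 * βmax * |β - β'|) * (lmax * (2 * B) * D) := by
            apply mul_le_mul (mul_le_mul_of_nonneg_left hββ2 hlam.le) hQd (abs_nonneg _)
            exact mul_nonneg hlam.le
              (mul_nonneg (mul_nonneg two_pos.le hβmax0.le) (abs_nonneg _))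
    have e2 : -(2 * lam * (β - β') * (Lf v - Lf u)) ≤ 2 * lam * |β - β'| * (CΦ * D) := by
      calc -(2 * lam * (β - β') * (Lf v - Lf u))
          ≤ |2 * lam * (β - β') * (Lf v - Lf u)| := neg_le_abs _
        _ = 2 * lam * |β - β'| * |Lf v - Lf u| := by
            rw [abs_mul, abs_mul, abs_of_pos (by linarith : (0:ℝ) < 2 * lam)]
        _ ≤ 2 * lam * |β - β'| * (CΦ * D) := by
            apply mul_le_mul_of_nonneg_left hLd
            exact mul_nonneg (by linarith) (abs_nonneg _)
    have hb2 : βmin ^ 2 ≤ β ^ 2 := by nlinarith [hβ.1, hβmin]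
    have hb2' : βmin ^ 2 ≤ β' ^ 2 := by nlinarith [hβ'.1, hβmin]
    have hmono1 : lam * βmin ^ 2 * lmin * D ^ 2 ≤ lam * β ^ 2 * lmin * D ^ 2 := by
      have := mul_le_mul_of_nonneg_left hb2 hlam.le
      have := mul_le_mul_of_nonneg_right
        (mul_le_mul_of_nonneg_right (mul_le_mul_of_nonneg_left hb2 hlam.le) hlmin0.le)
        (sq_nonneg D)
      linarith
    have hmono2 : lam * βmin ^ 2 * lmin * D ^ 2 ≤ lam * β' ^ 2 * lmin * D ^ 2 := by
      have := mul_le_mul_of_nonneg_right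
        (mul_le_mul_of_nonneg_right (mul_le_mul_of_nonneg_left hb2' hlam.le) hlmin0.le)
        (sq_nonneg D)
      linarith
    have hmain : 2 * lam * βmin ^ 2 * lmin * D ^ 2
        ≤ lam * (2 * βmax * |β - β'|) * (lmax * (2 * B) * D)
          + 2 * lam * |β - β'| * (CΦ * D) := by
      linarith [h1, h2, hdiffF, e1, e2, hmono1, hmono2]
    have hKpos : 0 < βmin ^ 2 * lmin := mul_pos (pow_pos hβmin 2) hlmin0
    have hextra : 0 ≤ 4 * βmax * lmax * B := by positivity
    have hcore : βmin ^ 2 * lmin * D ≤ (2 * βmax * lmax * B + CΦ) * |β - β'| := by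
      rcases eq_or_lt_of_le hD0 with hDz | hDz
      · rw [← hDz]
        have : 0 ≤ (2 * βmax * lmax * B + CΦ) * |β - β'| := by positivity
        linarith
      · have h2lamD : 0 < 2 * lam * D := mul_pos (mul_pos two_pos hlam) hDz
        apply le_of_mul_le_mul_right _ h2lamD
        nlinarith [hmain]
    calc ‖hb β - hb β'‖ = D := rfl
      _ = (βmin ^ 2 * lmin)⁻¹ * (βmin ^ 2 * lmin * D) := by field_simp
      _ ≤ (βmin ^ 2 * lmin)⁻¹ * ((2 * βmax * lmax * B + CΦ) * |β - β'|) :=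
          mul_le_mul_of_nonneg_left hcore (inv_nonneg.2 hKpos.le)
      _ ≤ (βmin ^ 2 * lmin)⁻¹
            * (((2 * βmax * lmax * B + CΦ) + 4 * βmax * lmax * B) * |β - β'|) := by
          apply mul_le_mul_of_nonneg_left _ (inv_nonneg.2 hKpos.le)
          apply mul_le_mul_of_nonneg_right _ (abs_nonneg _)
          linarith
      _ = (βmin ^ 2 * lmin)⁻¹ * ((2 * βmax * lmax * B + CΦ) + 4 * βmax * lmax * B)
            * |β - β'| := by ring
  refine ⟨part1, ?_⟩
  intro β hβ β' hβ'
  have hp1 := part1 β hβ β' hβ'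
  have hvB := (hhb β' hβ').1
  have hβabs : |β| ≤ βmax := by
    rw [abs_of_pos (lt_of_lt_of_le hβmin hβ.1)]; exact hβ.2
  calc ‖β • hb β - β' • hb β'‖
      = ‖β • (hb β - hb β') + (β - β') • hb β'‖ := by
        congr 1
        rw [smul_sub, sub_smul]
        abel
    _ ≤ ‖β • (hb β - hb β')‖ + ‖(β - β') • hb β'‖ := norm_add_le _ _
    _ = |β| * ‖hb β - hb β'‖ + |β - β'| * ‖hb β'‖ := by
        rw [norm_smul, norm_smul, Real.norm_eq_abs, Real.norm_eq_abs]
    _ ≤ βmax * ((βmin ^ 2 * lmin)⁻¹ * ((2 * βmax * lmax * B + CΦ) + 4 * βmax * lmax * B)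
          * |β - β'|) + |β - β'| * B := by
        apply add_le_add
        · exact mul_le_mul hβabs hp1 (norm_nonneg _) hβmax0.le
        · exact mul_le_mul_of_nonneg_left hvB (abs_nonneg _)
    _ = (B + βmax * ((βmin ^ 2 * lmin)⁻¹
          * ((2 * βmax * lmax * B + CΦ) + 4 * βmax * lmax * B))) * |β - β'| := by ring
end

section
/- Equivalence of LR-QR with the β-eliminated problem (Lemma J.1). Let ℋ be a linear subspace of L²(P₁,X), α ∈ (0,1), λ ≥ 0, and suppose E₁[r²] < ∞. Assume there exist h ∈ ℋ and β ∈ ℝ with E₁[ℓ_α(h(X),S)] + λE₁[(βh(X) − r(X))²] < E₁[ℓ_α(0,S)] + λE₁[r(X)²]. Define G_λ(h) = E₁[ℓ_α(h(X),S)] − λ·E₁[r(X)h(X)]²/E₁[h(X)²] for h ∈ ℋ∖{0}. Then: (i) if (h*,β*) is a global minimizer of L_λ(h,β) = E₁[ℓ_α(h(X),S)] + λ(β²E₁[h(X)²] − 2βE₂[h(X)]) over ℋ × ℝ, then h* minimizes G_λ over ℋ∖{0}; (ii) conversely, if h minimizes G_λ over ℋ∖{0}, then (h, E₁[rh]/E₁[h²])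 is a global minimizer of L_λ over ℋ × ℝ. -/
open MeasureTheory ProbabilityTheory Set
open scoped ENNReal

lemma neg_sq_div_le_sq_mul_sub_two_mul {Q C : ℝ} (hQ : 0 < Q) (β : ℝ) :
    -(C ^ 2 / Q) ≤ β ^ 2 * Q - 2 * β * C := by
  have h : C ^ 2 / Q * Q = C ^ 2 := div_mul_cancel₀ _ hQ.ne'
  nlinarith [sq_nonneg (β * Q - C)]

-- For `Q = 0` both sides are `0` under the convention `x / 0 = 0`.
lemma div_sq_mul_sub_two_mul_div (Q C : ℝ) :
    (C / Q) ^ 2 * Q - 2 * (C / Q) * C = -(C ^ 2 / Q) := by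
  rcases eq_or_ne Q 0 with rfl | hQ
  · simp
  · field_simp
    ring

lemma ae_eq_zero_of_integral_sq_eq_zero {𝒳 : Type*} [MeasurableSpace 𝒳] {μ : Measure 𝒳}
    {h : 𝒳 → ℝ} (hh : Integrable (fun x => h x ^ 2) μ) (h0 : ∫ x, h x ^ 2 ∂μ = 0) :
    h =ᵐ[μ] 0 := by
  filter_upwards [(integral_eq_zero_iff_of_nonneg (fun x => sq_nonneg (h x)) hh).mp h0] with x hx
  exact pow_eq_zero_iff two_ne_zero |>.mp hx

lemma ne_zero_of_integral_sq_pos {𝒳 : Type*} [MeasurableSpace 𝒳] {μ : Measure 𝒳}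
    {h : 𝒳 → ℝ} (hQ : 0 < ∫ x, h x ^ 2 ∂μ) : h ≠ fun _ => 0 := by
  rintro rfl
  simp at hQ

lemma integral_mul_sub_sq {𝒳 : Type*} [MeasurableSpace 𝒳] {μ : Measure 𝒳} {h r : 𝒳 → ℝ}
    (hh : MemLp h 2 μ) (hr : MemLp r 2 μ) (β : ℝ) :
    ∫ x, (β * h x - r x) ^ 2 ∂μ
      = β ^ 2 * (∫ x, h x ^ 2 ∂μ) - 2 * β * (∫ x, r x * h x ∂μ) + ∫ x, r x ^ 2 ∂μ := by
  have hrh : Integrable (fun x => r x * h x) μ := hr.integrable_mul hh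
  calc ∫ x, (β * h x - r x) ^ 2 ∂μ
      = ∫ x, (β ^ 2 * h x ^ 2 - 2 * β * (r x * h x) + r x ^ 2) ∂μ := by
        congr 1 with x; ring
    _ = _ := by
        have hQβ : Integrable (fun x => β ^ 2 * h x ^ 2) μ := hh.integrable_sq.const_mul _
        have hCβ : Integrable (fun x => 2 * β * (r x * h x)) μ := hrh.const_mul _
        have hLβ : Integrable (fun x => β ^ 2 * h x ^ 2 - 2 * β * (r x * h x)) μ := hQβ.sub hCβ
        rw [integral_add hLβ hr.integrable_sq, integral_sub hQβ hCβ,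
          integral_const_mul, integral_const_mul]

section Objectives

variable {𝒳 : Type*} [MeasurableSpace 𝒳] (μ : Measure 𝒳) (P : Measure (𝒳 × ℝ)) (α lam : ℝ)
  (r : 𝒳 → ℝ)

noncomputable def pinballRisk (h : 𝒳 → ℝ) : ℝ := ∫ p, pinball α (h p.1) p.2 ∂P

/-- The LR-QR objective `L_λ(h, β)`, with `E₂[h]` written as `E₁[r h]`. -/
noncomputable def lrqrObjective (h : 𝒳 → ℝ) (β : ℝ) : ℝ :=
  pinballRisk P α h + lam * (β ^ 2 * (∫ x, h x ^ 2 ∂μ) - 2 * β * ∫ x, r x * h x ∂μ)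

noncomputable def betaEliminatedObjective (h : 𝒳 → ℝ) : ℝ :=
  pinballRisk P α h - lam * (∫ x, r x * h x ∂μ) ^ 2 / (∫ x, h x ^ 2 ∂μ)

variable {μ P}

lemma pinballRisk_congr_ae (hPX : P.map Prod.fst = μ) {h g : 𝒳 → ℝ} (hhg : h =ᵐ[μ] g) :
    pinballRisk P α h = pinballRisk P α g := by
  have hcomp : h ∘ Prod.fst =ᵐ[P] g ∘ Prod.fst :=
    ae_eq_comp measurable_fst.aemeasurable (hPX ▸ hhg)
  refine integral_congr_ae ?_
  filter_upwards [hcomp] with p hp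
  simp only [Function.comp_apply] at hp
  rw [hp]

lemma lrqrObjective_eq_pinballRisk_zero (hPX : P.map Prod.fst = μ) {h : 𝒳 → ℝ}
    (hh : MemLp h 2 μ) (hQ : ∫ x, h x ^ 2 ∂μ = 0) (β : ℝ) :
    lrqrObjective μ P α lam r h β = pinballRisk P α 0 := by
  have h0 := ae_eq_zero_of_integral_sq_eq_zero hh.integrable_sq hQ
  have hC : ∫ x, r x * h x ∂μ = 0 := by
    have hrh : (fun x => r x * h x) =ᵐ[μ] 0 := h0.mono fun x hx => by simp [hx]
    simp [integral_congr_ae hrh]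
  simp only [lrqrObjective, hQ, hC, pinballRisk_congr_ae α hPX h0]
  ring

lemma lrqrObjective_div_eq_betaEliminatedObjective (h : 𝒳 → ℝ) :
    lrqrObjective μ P α lam r h ((∫ x, r x * h x ∂μ) / (∫ x, h x ^ 2 ∂μ))
      = betaEliminatedObjective μ P α lam r h := by
  rw [lrqrObjective, betaEliminatedObjective, div_sq_mul_sub_two_mul_div, mul_div_assoc]
  ring

lemma betaEliminatedObjective_le_lrqrObjective (hPX : P.map Prod.fst = μ) (hlam : 0 ≤ lam)
    {h : 𝒳 → ℝ} (hh : MemLp h 2 μ) (β : ℝ) :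
    betaEliminatedObjective μ P α lam r h ≤ lrqrObjective μ P α lam r h β := by
  rcases (integral_nonneg fun x => sq_nonneg (h x) : 0 ≤ ∫ x, h x ^ 2 ∂μ).eq_or_lt with hQ | hQ
  · rw [← lrqrObjective_div_eq_betaEliminatedObjective,
      lrqrObjective_eq_pinballRisk_zero α lam r hPX hh hQ.symm,
      lrqrObjective_eq_pinballRisk_zero α lam r hPX hh hQ.symm]
  · rw [← lrqrObjective_div_eq_betaEliminatedObjective, lrqrObjective, lrqrObjective,
      div_sq_mul_sub_two_mul_div]
    gcongr
    exact neg_sq_div_le_sq_mul_sub_two_mul hQ β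

lemma integral_sq_pos_of_lrqrObjective_lt (hPX : P.map Prod.fst = μ) {h : 𝒳 → ℝ}
    (hh : MemLp h 2 μ) {β : ℝ} (hlt : lrqrObjective μ P α lam r h β < pinballRisk P α 0) :
    0 < ∫ x, h x ^ 2 ∂μ := by
  refine (integral_nonneg fun x => sq_nonneg (h x)).lt_of_ne fun hQ => hlt.ne ?_
  exact lrqrObjective_eq_pinballRisk_zero α lam r hPX hh hQ.symm β

end Objectives

theorem lrqr_beta_elimination_equivalence_general
    {𝒳 : Type*} [MeasurableSpace 𝒳]
    (μX : Measure 𝒳)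
    (P : Measure (𝒳 × ℝ))
    (hPX : P.map Prod.fst = μX)
    (H : Set (𝒳 → ℝ))
    (hHL2 : ∀ h ∈ H, MemLp h 2 μX)
    (α lam : ℝ) (hlam : 0 ≤ lam)
    (r : 𝒳 → ℝ)
    (hr2 : MemLp r 2 μX)
    -- zero is suboptimal
    (hzero : ∃ h ∈ H, ∃ β : ℝ,
      (∫ p, pinball α (h p.1) p.2 ∂P) + lam * ∫ x, (β * h x - r x) ^ 2 ∂μX
        < (∫ p, pinball α (0 : ℝ) p.2 ∂P) + lam * ∫ x, r x ^ 2 ∂μX) :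
    -- (i)
    (∀ hstar ∈ H, ∀ βstar : ℝ,
      (∀ h ∈ H, ∀ β : ℝ,
        (∫ p, pinball α (hstar p.1) p.2 ∂P)
            + lam * (βstar ^ 2 * (∫ x, hstar x ^ 2 ∂μX) - 2 * βstar * ∫ x, r x * hstar x ∂μX)
          ≤ (∫ p, pinball α (h p.1) p.2 ∂P)
            + lam * (β ^ 2 * (∫ x, h x ^ 2 ∂μX) - 2 * β * ∫ x, r x * h x ∂μX)) →
      hstar ≠ (fun _ => (0 : ℝ)) ∧
        ∀ h ∈ H, h ≠ (fun _ => (0 : ℝ)) →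
          (∫ p, pinball α (hstar p.1) p.2 ∂P)
              - lam * (∫ x, r x * hstar x ∂μX) ^ 2 / (∫ x, hstar x ^ 2 ∂μX)
            ≤ (∫ p, pinball α (h p.1) p.2 ∂P)
              - lam * (∫ x, r x * h x ∂μX) ^ 2 / (∫ x, h x ^ 2 ∂μX))
    ∧
    -- (ii)
    (∀ h ∈ H, h ≠ (fun _ => (0 : ℝ)) →
      (∀ h' ∈ H, h' ≠ (fun _ => (0 : ℝ)) →
        (∫ p, pinball α (h p.1) p.2 ∂P)
            - lam * (∫ x, r x * h x ∂μX) ^ 2 / (∫ x, h x ^ 2 ∂μX)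
          ≤ (∫ p, pinball α (h' p.1) p.2 ∂P)
            - lam * (∫ x, r x * h' x ∂μX) ^ 2 / (∫ x, h' x ^ 2 ∂μX)) →
      ∀ h' ∈ H, ∀ β : ℝ,
        (∫ p, pinball α (h p.1) p.2 ∂P)
            + lam * (((∫ x, r x * h x ∂μX) / (∫ x, h x ^ 2 ∂μX)) ^ 2 * (∫ x, h x ^ 2 ∂μX)
              - 2 * ((∫ x, r x * h x ∂μX) / (∫ x, h x ^ 2 ∂μX)) * ∫ x, r x * h x ∂μX)
          ≤ (∫ p, pinball α (h' p.1) p.2 ∂P)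
            + lam * (β ^ 2 * (∫ x, h' x ^ 2 ∂μX) - 2 * β * ∫ x, r x * h' x ∂μX)) := by
  obtain ⟨h₀, hh₀, β₀, hlt⟩ := hzero
  have hL₀ : lrqrObjective μX P α lam r h₀ β₀ < pinballRisk P α 0 := by
    rw [integral_mul_sub_sq (hHL2 h₀ hh₀) hr2] at hlt
    simp only [lrqrObjective, pinballRisk, Pi.zero_apply]
    linarith
  have hQ₀ := integral_sq_pos_of_lrqrObjective_lt α lam r hPX (hHL2 h₀ hh₀) hL₀
  have hG_le_L : ∀ h ∈ H, ∀ β,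
      betaEliminatedObjective μX P α lam r h ≤ lrqrObjective μX P α lam r h β :=
    fun h hh β => betaEliminatedObjective_le_lrqrObjective α lam r hPX hlam (hHL2 h hh) β
  refine ⟨fun hs hsH βs hmin => ?_, fun h _ _ hmin h' hh' β => ?_⟩
  · have hQs := integral_sq_pos_of_lrqrObjective_lt α lam r hPX (hHL2 hs hsH)
      ((hmin h₀ hh₀ β₀).trans_lt hL₀)
    refine ⟨ne_zero_of_integral_sq_pos hQs, fun h hh _ => ?_⟩
    calc betaEliminatedObjective μX P α lam r hs
        ≤ lrqrObjective μX P α lam r hs βs := hG_le_L hs hsH βs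
      _ ≤ lrqrObjective μX P α lam r h _ := hmin h hh _
      _ = betaEliminatedObjective μX P α lam r h :=
        lrqrObjective_div_eq_betaEliminatedObjective α lam r h
  · change lrqrObjective μX P α lam r h _ ≤ lrqrObjective μX P α lam r h' β
    rw [lrqrObjective_div_eq_betaEliminatedObjective]
    rcases (integral_nonneg fun x => sq_nonneg (h' x) : 0 ≤ ∫ x, h' x ^ 2 ∂μX).eq_or_lt
      with hQ' | hQ'
    · calc betaEliminatedObjective μX P α lam r h
          ≤ betaEliminatedObjective μX P α lam r h₀ :=
            hmin h₀ hh₀ (ne_zero_of_integral_sq_pos hQ₀)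
        _ ≤ lrqrObjective μX P α lam r h₀ β₀ := hG_le_L h₀ hh₀ β₀
        _ ≤ pinballRisk P α 0 := hL₀.le
        _ = lrqrObjective μX P α lam r h' β :=
          (lrqrObjective_eq_pinballRisk_zero α lam r hPX (hHL2 h' hh') hQ'.symm β).symm
    · exact (hmin h' hh' (ne_zero_of_integral_sq_pos hQ')).trans (hG_le_L h' hh' β)

/-- Lemma J.1: equivalence of LR-QR with the `β`-eliminated problem.  `H` is a linear subspace
of `L²(P₁,X)` (a set of square-integrable functions closed under linear combinations),
`L_λ(h,β) = E₁[ℓ_α(h(X),S)] + λ(β²E₁[h²] − 2βE₁[r h])` (using `E₂[h] = E₁[r h]`), and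
`G_λ(h) = E₁[ℓ_α(h(X),S)] − λ E₁[r h]² / E₁[h²]` on `H ∖ {0}`.  Then (i) the `h`-component of
any global minimizer of `L_λ` over `H × ℝ` minimizes `G_λ` over `H ∖ {0}`, and (ii) any
minimizer `h` of `G_λ` over `H ∖ {0}` yields the global minimizer `(h, E₁[r h]/E₁[h²])` of
`L_λ` over `H × ℝ`. -/
theorem lrqr_beta_elimination_equivalence
    {𝒳 : Type*} [MeasurableSpace 𝒳]
    (μX : Measure 𝒳) [IsProbabilityMeasure μX]
    (P : Measure (𝒳 × ℝ)) [IsProbabilityMeasure P]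
    (hPX : P.map Prod.fst = μX)
    (hS01 : ∀ᵐ p ∂P, p.2 ∈ Icc (0 : ℝ) 1)
    (H : Set (𝒳 → ℝ))
    (hHlin : ∀ f ∈ H, ∀ g ∈ H, ∀ c₁ c₂ : ℝ, (fun x => c₁ * f x + c₂ * g x) ∈ H)
    (hHL2 : ∀ h ∈ H, MemLp h 2 μX)
    (α lam : ℝ) (hα : α ∈ Set.Ioo (0 : ℝ) 1) (hlam : 0 ≤ lam)
    (r : 𝒳 → ℝ) (hrmeas : Measurable r) (hrnn : ∀ x, 0 ≤ r x)
    (hrmean : ∫ x, r x ∂μX = 1)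
    (hr2 : MemLp r 2 μX)
    -- zero is suboptimal
    (hzero : ∃ h ∈ H, ∃ β : ℝ,
      (∫ p, pinball α (h p.1) p.2 ∂P) + lam * ∫ x, (β * h x - r x) ^ 2 ∂μX
        < (∫ p, pinball α (0 : ℝ) p.2 ∂P) + lam * ∫ x, r x ^ 2 ∂μX) :
    -- (i)
    (∀ hstar ∈ H, ∀ βstar : ℝ,
      (∀ h ∈ H, ∀ β : ℝ,
        (∫ p, pinball α (hstar p.1) p.2 ∂P)
            + lam * (βstar ^ 2 * (∫ x, hstar x ^ 2 ∂μX) - 2 * βstar * ∫ x, r x * hstar x ∂μX)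
          ≤ (∫ p, pinball α (h p.1) p.2 ∂P)
            + lam * (β ^ 2 * (∫ x, h x ^ 2 ∂μX) - 2 * β * ∫ x, r x * h x ∂μX)) →
      hstar ≠ (fun _ => (0 : ℝ)) ∧
        ∀ h ∈ H, h ≠ (fun _ => (0 : ℝ)) →
          (∫ p, pinball α (hstar p.1) p.2 ∂P)
              - lam * (∫ x, r x * hstar x ∂μX) ^ 2 / (∫ x, hstar x ^ 2 ∂μX)
            ≤ (∫ p, pinball α (h p.1) p.2 ∂P)
              - lam * (∫ x, r x * h x ∂μX) ^ 2 / (∫ x, h x ^ 2 ∂μX))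
    ∧
    -- (ii)
    (∀ h ∈ H, h ≠ (fun _ => (0 : ℝ)) →
      (∀ h' ∈ H, h' ≠ (fun _ => (0 : ℝ)) →
        (∫ p, pinball α (h p.1) p.2 ∂P)
            - lam * (∫ x, r x * h x ∂μX) ^ 2 / (∫ x, h x ^ 2 ∂μX)
          ≤ (∫ p, pinball α (h' p.1) p.2 ∂P)
            - lam * (∫ x, r x * h' x ∂μX) ^ 2 / (∫ x, h' x ^ 2 ∂μX)) →
      ∀ h' ∈ H, ∀ β : ℝ,
        (∫ p, pinball α (h p.1) p.2 ∂P)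
            + lam * (((∫ x, r x * h x ∂μX) / (∫ x, h x ^ 2 ∂μX)) ^ 2 * (∫ x, h x ^ 2 ∂μX)
              - 2 * ((∫ x, r x * h x ∂μX) / (∫ x, h x ^ 2 ∂μX)) * ∫ x, r x * h x ∂μX)
          ≤ (∫ p, pinball α (h' p.1) p.2 ∂P)
            + lam * (β ^ 2 * (∫ x, h' x ^ 2 ∂μX) - 2 * β * ∫ x, r x * h' x ∂μX)) :=
  lrqr_beta_elimination_equivalence_general μX P hPX H hHL2 α lam hlam r hr2 hzero
end

section
/- Replace-one stability of strongly convex ERM (key step in the proof of Lemma E.1). Let K be a convex subset of a normed space, let F : K → ℝ be μ-strongly convex (μ > 0), and let j, j' : K → ℝ be ρ-Lipschitz with F' := F + (j − j')/m convex, where m ≥ 1. If x minimizes F over K and x' minimizes F' over K, then ‖x − x'‖ ≤ 4ρ/(μm), and consequently |j(x') − j(x)| ≤ 4ρ²/(μm). -/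
/-- Replace-one stability of strongly convex ERM (key step in the proof of Lemma E.1).
`F` is `μ`-strongly convex on the convex set `K` (in the midpoint/segment sense), `j` and `j'`
are `ρ`-Lipschitz on `K`, and `F' = F + (j − j')/m` is convex on `K`.  If `x` minimizes `F`
over `K` and `x'` minimizes `F'` over `K`, then `‖x − x'‖ ≤ 4ρ/(μm)` and
`|j x' − j x| ≤ 4ρ²/(μm)`. -/
theorem replace_one_stability {E : Type*} [NormedAddCommGroup E] [NormedSpace ℝ E]
    (K : Set E) (hK : Convex ℝ K)
    (F j j' : E → ℝ) (μ ρ m : ℝ) (hμ : 0 < μ) (hρ : 0 ≤ ρ) (hm : 1 ≤ m)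
    (hFsc : ∀ x ∈ K, ∀ y ∈ K, ∀ t ∈ Set.Icc (0 : ℝ) 1,
      F (t • x + (1 - t) • y) ≤ t * F x + (1 - t) * F y - μ / 2 * t * (1 - t) * ‖x - y‖ ^ 2)
    (hj : ∀ x ∈ K, ∀ y ∈ K, |j x - j y| ≤ ρ * ‖x - y‖)
    (hj' : ∀ x ∈ K, ∀ y ∈ K, |j' x - j' y| ≤ ρ * ‖x - y‖)
    (hF'conv : ConvexOn ℝ K (fun x => F x + (j x - j' x) / m))
    (x x' : E) (hx : x ∈ K) (hx' : x' ∈ K)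
    (hxmin : ∀ y ∈ K, F x ≤ F y)
    (hx'min : ∀ y ∈ K, F x' + (j x' - j' x') / m ≤ F y + (j y - j' y) / m) :
    ‖x - x'‖ ≤ 4 * ρ / (μ * m) ∧ |j x' - j x| ≤ 4 * ρ ^ 2 / (μ * m) := by

  have hm0 : (0:ℝ) < m := lt_of_lt_of_le one_pos hm
  set d := ‖x - x'‖ with hd
  have hd0 : 0 ≤ d := norm_nonneg _
  -- quadratic growth of F at its minimizer x
  have hgrow : μ / 2 * d ^ 2 ≤ F x' - F x := by
    have h1 : ∀ t ∈ Set.Ioc (0:ℝ) 1, μ / 2 * (1 - t) * d ^ 2 ≤ F x' - F x := by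
      intro t ht
      have htI : t ∈ Set.Icc (0:ℝ) 1 := ⟨ht.1.le, ht.2⟩
      have hmem : t • x' + (1 - t) • x ∈ K :=
        hK hx' hx ht.1.le (by linarith [ht.2]) (by ring)
      have h2 := hFsc x' hx' x hx t htI
      have h3 := hxmin _ hmem
      have hnorm : ‖x' - x‖ = d := by rw [hd, norm_sub_rev]
      rw [hnorm] at h2
      nlinarith [ht.1]
    have hev : ∀ᶠ t in nhdsWithin (0:ℝ) (Set.Ioi 0),
        μ / 2 * (1 - t) * d ^ 2 ≤ F x' - F x := by
      filter_upwards [Ioc_mem_nhdsGT_of_mem (Set.left_mem_Ico.2 one_pos)] with t ht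
      exact h1 t ht
    have htend : Filter.Tendsto (fun t : ℝ => μ / 2 * (1 - t) * d ^ 2)
        (nhdsWithin 0 (Set.Ioi 0)) (nhds (μ / 2 * d ^ 2)) := by
      have hc : Continuous fun t : ℝ => μ / 2 * (1 - t) * d ^ 2 := by continuity
      have h0 := (hc.tendsto 0).mono_left (nhdsWithin_le_nhds (s := Set.Ioi (0:ℝ)))
      simpa using h0
    exact le_of_tendsto htend hev
  -- minimality of x' for F'
  have hmin' := hx'min x hx
  have hjx : |j x - j x'| ≤ ρ * d := hj x hx x' hx'
  have hj'x : |j' x - j' x'| ≤ ρ * d := hj' x hx x' hx'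
  have habs1 := abs_le.1 hjx
  have habs2 := abs_le.1 hj'x
  -- μ/2 d^2 ≤ 2 ρ d / m, i.e. μ m d^2 ≤ 4 ρ d
  have hmul : m * (F x' + (j x' - j' x') / m) ≤ m * (F x + (j x - j' x) / m) :=
    mul_le_mul_of_nonneg_left hmin' hm0.le
  have hsimp : m * F x' + (j x' - j' x') ≤ m * F x + (j x - j' x) := by
    rw [mul_add, mul_add, mul_div_cancel₀ _ hm0.ne', mul_div_cancel₀ _ hm0.ne'] at hmul
    linarith
  have hkey : μ * m * d ^ 2 ≤ 4 * ρ * d := by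
    nlinarith [mul_le_mul_of_nonneg_left hgrow hm0.le]
  have hμm : 0 < μ * m := mul_pos hμ hm0
  have h1 : d ≤ 4 * ρ / (μ * m) := by
    rw [le_div_iff₀ hμm]
    rcases eq_or_lt_of_le hd0 with h | h
    · nlinarith [hρ]
    · nlinarith [hkey, h]
  refine ⟨h1, ?_⟩
  have h2 : |j x' - j x| ≤ ρ * d := by
    have := hj x' hx' x hx
    rwa [norm_sub_rev] at this
  calc |j x' - j x| ≤ ρ * d := h2
    _ ≤ ρ * (4 * ρ / (μ * m)) := mul_le_mul_of_nonneg_left h1 hρ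
    _ = 4 * ρ ^ 2 / (μ * m) := by ring
end

section
/- First-order stationarity implies exact reweighted coverage (core identity in the proof of Proposition 1). Let ℋ be a linear subspace of L²(P₁,X) with 1 ∈ ℋ, let r ∈ L²(P₁,X) satisfy E₁[r(X)] = 1, and let r_ℋ be the orthogonal projection of r onto ℋ in L²(P₁,X). Let h* ∈ ℋ, β* ∈ ℝ, λ ≥ 0, α ∈ (0,1), and let F : 𝒳 → [0,1] be measurable. Suppose the stationarity conditions hold: (i) E₁[h*(X)·(β*h*(X) − r(X))] = 0, and (ii) for every h ∈ ℋ: E₁[h(X)·(F(X) − (1−α))] + 2λβ*·E₁[h(X)·(β*h*(X) − r(X))] = 0. Then E₁[r_ℋ(X)·F(X)] = (1−α) + 2λβ*·E₁[(r_ℋ(X) − β*h*(X))²]. In particular, if β* ≥ 0 then E₁[r_ℋ(X)·F(X)] ≥ 1 − α. -/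
/-!
Test stationarity condition (ii) against `r_ℋ` itself. Since `r - r_ℋ` is orthogonal to `ℋ`, the
function `r` may be replaced by `r_ℋ` in both stationarity conditions. Condition (i) then says that
`β* h*` is orthogonal to the residual `β* h* - r_ℋ`, so pairing this residual with `r_ℋ` gives
`-E₁[(r_ℋ - β* h*)²]`, while `E₁[r_ℋ] = E₁[r] = 1` turns the coverage term into
`E₁[r_ℋ F] - (1 - α)`.
-/

open MeasureTheory

section L2Pairing

variable {α : Type*} [MeasurableSpace α] {μ : Measure α}

lemma integral_mul_sub_const {f g : α → ℝ} (hfg : Integrable (fun x => f x * g x) μ)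
    (hf : Integrable f μ) (c : ℝ) :
    ∫ x, f x * (g x - c) ∂μ = ∫ x, f x * g x ∂μ - c * ∫ x, f x ∂μ := by
  rw [← integral_const_mul, ← integral_sub hfg (hf.const_mul c)]
  congr 1 with x
  ring

lemma integral_mul_sub_eq_of_orthogonal {g b r p : α → ℝ}
    (hg : MemLp g 2 μ) (hb : MemLp b 2 μ) (hr : MemLp r 2 μ) (hp : MemLp p 2 μ)
    (horth : ∫ x, (r x - p x) * g x ∂μ = 0) :
    ∫ x, g x * (b x - r x) ∂μ = ∫ x, g x * (b x - p x) ∂μ :=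
  calc ∫ x, g x * (b x - r x) ∂μ
      = ∫ x, (g x * (b x - p x) - (r x - p x) * g x) ∂μ := by congr 1 with x; ring
    _ = ∫ x, g x * (b x - p x) ∂μ - ∫ x, (r x - p x) * g x ∂μ :=
        integral_sub (hg.integrable_mul (hb.sub hp)) ((hr.sub hp).integrable_mul hg)
    _ = ∫ x, g x * (b x - p x) ∂μ := by rw [horth, sub_zero]

lemma integral_mul_sub_eq_integral_mul_sub_sub_integral_sq {p b : α → ℝ}
    (hp : MemLp p 2 μ) (hb : MemLp b 2 μ) :
    ∫ x, p x * (b x - p x) ∂μ = ∫ x, b x * (b x - p x) ∂μ - ∫ x, (p x - b x) ^ 2 ∂μ := by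
  rw [← integral_sub (f := fun x => b x * (b x - p x)) (g := fun x => (p x - b x) ^ 2)
    (hb.integrable_mul (hb.sub hp)) (hp.sub hb).integrable_sq]
  congr 1 with x
  ring

end L2Pairing

/-- `rH` is the orthogonal projection of `r` onto `H`, encoded by membership and the orthogonality
relations; `F x` plays the role of the conditional coverage probability `P(S ≤ h*(X) | X = x)`. -/
theorem stationarity_implies_reweighted_coverage_general
    {𝒳 : Type*} [MeasurableSpace 𝒳] (μX : Measure 𝒳) [IsProbabilityMeasure μX]
    (H : Set (𝒳 → ℝ))
    (hHL2 : ∀ h ∈ H, MemLp h 2 μX)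
    (hone : (fun _ => (1 : ℝ)) ∈ H)
    (r rH hstar : 𝒳 → ℝ) (βstar lam α : ℝ) (hlam : 0 ≤ lam)
    (hr2 : MemLp r 2 μX)
    (hrmean : ∫ x, r x ∂μX = 1)
    (hrHmem : rH ∈ H)
    (hproj : ∀ h ∈ H, ∫ x, (r x - rH x) * h x ∂μX = 0)
    (hhmem : hstar ∈ H)
    (F : 𝒳 → ℝ) (hFmeas : Measurable F) (hF : ∀ x, F x ∈ Set.Icc (0 : ℝ) 1)
    (hstat1 : ∫ x, hstar x * (βstar * hstar x - r x) ∂μX = 0)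
    (hstat2 : ∀ h ∈ H, (∫ x, h x * (F x - (1 - α)) ∂μX)
      + 2 * lam * βstar * ∫ x, h x * (βstar * hstar x - r x) ∂μX = 0) :
    (∫ x, rH x * F x ∂μX
        = (1 - α) + 2 * lam * βstar * ∫ x, (rH x - βstar * hstar x) ^ 2 ∂μX)
    ∧ (0 ≤ βstar → (1 - α) ≤ ∫ x, rH x * F x ∂μX) := by
  have hrH := hHL2 rH hrHmem
  have hh := hHL2 hstar hhmem
  have hβh : MemLp (fun x => βstar * hstar x) 2 μX := hh.const_mul βstar
  have hFL2 : MemLp F 2 μX := .of_bound hFmeas.aestronglyMeasurable 1 <| ae_of_all _ fun x => by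
    rw [Real.norm_eq_abs, abs_le]
    exact ⟨by linarith [(hF x).1], (hF x).2⟩
  have hmean : ∫ x, rH x ∂μX = 1 := by
    have h := hproj _ hone
    simp only [mul_one] at h
    rw [integral_sub (hr2.integrable one_le_two) (hrH.integrable one_le_two)] at h
    linarith
  have hβh_orth : ∫ x, βstar * hstar x * (βstar * hstar x - rH x) ∂μX = 0 := by
    simp only [mul_assoc]
    rw [integral_const_mul, ← integral_mul_sub_eq_of_orthogonal hh hβh hr2 hrH (hproj _ hhmem),
      hstat1, mul_zero]
  have hresidual : ∫ x, rH x * (βstar * hstar x - r x) ∂μX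
      = -∫ x, (rH x - βstar * hstar x) ^ 2 ∂μX := by
    rw [integral_mul_sub_eq_of_orthogonal hrH hβh hr2 hrH (hproj _ hrHmem),
      integral_mul_sub_eq_integral_mul_sub_sub_integral_sq hrH hβh, hβh_orth, zero_sub]
  have hcov := hstat2 rH hrHmem
  rw [integral_mul_sub_const (hrH.integrable_mul hFL2) (hrH.integrable one_le_two), hmean,
    hresidual] at hcov
  have hmain : ∫ x, rH x * F x ∂μX
      = (1 - α) + 2 * lam * βstar * ∫ x, (rH x - βstar * hstar x) ^ 2 ∂μX := by linarith
  refine ⟨hmain, fun hβ => hmain ▸ le_add_of_nonneg_right ?_⟩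
  exact mul_nonneg (by positivity) (integral_nonneg fun x => sq_nonneg _)

/-- First-order stationarity implies exact reweighted coverage (core identity in the proof of
Proposition 1).  `H` is a linear subspace of `L²(P₁,X)` (encoded as a set of square-integrable
functions closed under linear combinations) containing the constant function `1`; `rH` is the
orthogonal projection of `r` onto `H` (encoded by membership and the orthogonality relations);
`F x` plays the role of the conditional coverage probability `P(S ≤ h*(X) | X = x)`. -/
theorem stationarity_implies_reweighted_coverage
    {𝒳 : Type*} [MeasurableSpace 𝒳] (μX : Measure 𝒳) [IsProbabilityMeasure μX]
    (H : Set (𝒳 → ℝ))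
    (hHlin : ∀ f ∈ H, ∀ g ∈ H, ∀ c₁ c₂ : ℝ, (fun x => c₁ * f x + c₂ * g x) ∈ H)
    (hHL2 : ∀ h ∈ H, MemLp h 2 μX)
    (hone : (fun _ => (1 : ℝ)) ∈ H)
    (r rH hstar : 𝒳 → ℝ) (βstar lam α : ℝ) (hlam : 0 ≤ lam) (hα : α ∈ Set.Ioo (0 : ℝ) 1)
    (hr2 : MemLp r 2 μX)
    (hrmean : ∫ x, r x ∂μX = 1)
    (hrHmem : rH ∈ H)
    (hproj : ∀ h ∈ H, ∫ x, (r x - rH x) * h x ∂μX = 0)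
    (hhmem : hstar ∈ H)
    (F : 𝒳 → ℝ) (hFmeas : Measurable F) (hF : ∀ x, F x ∈ Set.Icc (0 : ℝ) 1)
    (hstat1 : ∫ x, hstar x * (βstar * hstar x - r x) ∂μX = 0)
    (hstat2 : ∀ h ∈ H, (∫ x, h x * (F x - (1 - α)) ∂μX)
      + 2 * lam * βstar * ∫ x, h x * (βstar * hstar x - r x) ∂μX = 0) :
    (∫ x, rH x * F x ∂μX
        = (1 - α) + 2 * lam * βstar * ∫ x, (rH x - βstar * hstar x) ^ 2 ∂μX)
    ∧ (0 ≤ βstar → (1 - α) ≤ ∫ x, rH x * F x ∂μX) :=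
  stationarity_implies_reweighted_coverage_general μX H hHL2 hone r rH hstar βstar lam α hlam hr2
    hrmean hrHmem hproj hhmem F hFmeas hF hstat1 hstat2
end
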